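/- Mirror step computation: for x ∈ ℝⁿ and p = ∇ψ(x) - γ∇f(x) with ψ(x) = ‖x‖⁴/4 + ‖x‖²/2, the solution of ∇ψ(x⁺) = p is x⁺ = t* p, where t* is the unique positive real root of t³‖p‖² + t - 1 = 0 (when p ≠ 0). -/

import Mathlib

/-!
`∇ψ(x) = (‖x‖² + 1) x` is a positive multiple of `x`, so a solution of `∇ψ(x) = p` must be
`x = s p` with `s = (‖x‖² + 1)⁻¹`; substituting `‖x‖ = s ‖p‖` turns this into the cubic
`s³ ‖p‖² + s = 1`, whose left side is strictly increasing on `[0, ∞)`, so it has exactly one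
positive root.
-/

noncomputable def psiEnt {n : ℕ} (x : EuclideanSpace ℝ (Fin n)) : ℝ :=
  ‖x‖ ^ 4 / 4 + ‖x‖ ^ 2 / 2

section Radial

variable {E : Type*} [NormedAddCommGroup E] [InnerProductSpace ℝ E] [CompleteSpace E]

theorem HasDerivAt.hasGradientAt_comp_norm_sq {φ : ℝ → ℝ} {φ' : ℝ} {x : E}
    (hφ : HasDerivAt φ φ' (‖x‖ ^ 2)) :
    HasGradientAt (fun y => φ (‖y‖ ^ 2)) ((2 * φ') • x) x := by
  rw [hasGradientAt_iff_hasFDerivAt]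
  refine (hφ.comp_hasFDerivAt x ((hasFDerivAt_id x).norm_sq)).congr_fderiv ?_
  ext v
  simp only [InnerProductSpace.toDual, LinearIsometryEquiv.coe_ofSurjective,
    InnerProductSpace.toDualMap_apply_apply, smul_apply, id_eq,
    ContinuousLinearMap.comp_id, coe_innerSL_apply, real_inner_smul_left, nsmul_eq_mul, smul_eq_mul]
  ring

end Radial

theorem gradient_psiEnt {n : ℕ} (x : EuclideanSpace ℝ (Fin n)) :
    gradient psiEnt x = (‖x‖ ^ 2 + 1) • x := by
  have hφ : HasDerivAt (fun u : ℝ => u ^ 2 / 4 + u / 2) (‖x‖ ^ 2 / 2 + 1 / 2) (‖x‖ ^ 2) := by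
    refine (((hasDerivAt_pow 2 (‖x‖ ^ 2)).div_const 4).add
      ((hasDerivAt_id (‖x‖ ^ 2)).div_const 2)).congr_deriv ?_
    ring
  have hψ : psiEnt (n := n) = fun y => (‖y‖ ^ 2) ^ 2 / 4 + ‖y‖ ^ 2 / 2 := by
    ext y
    simp only [psiEnt]
    ring
  rw [hψ, hφ.hasGradientAt_comp_norm_sq.gradient]
  congr 1
  ring

theorem strictMono_cubic_add_self {c : ℝ} (hc : 0 ≤ c) : StrictMono fun t : ℝ => t ^ 3 * c + t :=
  fun a b hab => by
    have : a ^ 3 ≤ b ^ 3 := (Odd.strictMono_pow (by decide)).monotone hab.le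
    dsimp only
    nlinarith

theorem existsUnique_pos_cubic_root {c : ℝ} (hc : 0 ≤ c) :
    ∃! t : ℝ, 0 < t ∧ t ^ 3 * c + t - 1 = 0 := by
  obtain ⟨t, ⟨ht0, -⟩, hroot⟩ : ∃ t ∈ Set.Icc (0 : ℝ) 1, t ^ 3 * c + t = 1 :=
    intermediate_value_Icc zero_le_one (by fun_prop) ⟨by simp, by simpa using hc⟩
  have htpos : 0 < t := ht0.lt_of_ne (by rintro rfl; simp at hroot)
  refine ⟨t, ⟨htpos, sub_eq_zero.mpr hroot⟩, fun s ⟨_, hs⟩ => ?_⟩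
  exact (strictMono_cubic_add_self hc).injective (show s ^ 3 * c + s = t ^ 3 * c + t by linarith)

section Inversion

variable {E : Type*} [NormedAddCommGroup E] [NormedSpace ℝ E]

theorem norm_sq_add_one_smul_smul_of_cubic_root {p : E} {t : ℝ} (ht : 0 ≤ t)
    (hroot : t ^ 3 * ‖p‖ ^ 2 + t - 1 = 0) :
    (‖t • p‖ ^ 2 + 1) • t • p = p := by
  rw [smul_smul, norm_smul, Real.norm_of_nonneg ht]
  convert one_smul ℝ p using 2
  linear_combination hroot

theorem eq_smul_of_norm_sq_add_one_smul_eq {p x : E} (h : (‖x‖ ^ 2 + 1) • x = p) :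
    ∃ s : ℝ, 0 < s ∧ s ^ 3 * ‖p‖ ^ 2 + s - 1 = 0 ∧ x = s • p := by
  have hpos : 0 < ‖x‖ ^ 2 + 1 := by positivity
  refine ⟨(‖x‖ ^ 2 + 1)⁻¹, inv_pos.mpr hpos, ?_, ?_⟩
  · rw [← h, norm_smul, Real.norm_of_nonneg hpos.le]
    field_simp
    ring
  · rw [← h, smul_smul, inv_mul_cancel₀ hpos.ne', one_smul]

end Inversion

theorem mirror_step_computation_general {n : ℕ} (p : EuclideanSpace ℝ (Fin n)) :
    ∃ t : ℝ, 0 < t ∧ t ^ 3 * ‖p‖ ^ 2 + t - 1 = 0 ∧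
      (∀ s : ℝ, 0 < s → s ^ 3 * ‖p‖ ^ 2 + s - 1 = 0 → s = t) ∧
      (∀ xplus : EuclideanSpace ℝ (Fin n),
        gradient (psiEnt (n := n)) xplus = p ↔ xplus = t • p) := by
  obtain ⟨t, ⟨htpos, hroot⟩, huniq⟩ := existsUnique_pos_cubic_root (sq_nonneg ‖p‖)
  refine ⟨t, htpos, hroot, fun s hs hsroot => huniq s ⟨hs, hsroot⟩, fun x => ?_⟩
  rw [gradient_psiEnt]
  constructor
  · intro hx
    obtain ⟨s, hs, hsroot, rfl⟩ := eq_smul_of_norm_sq_add_one_smul_eq hx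
    rw [huniq s ⟨hs, hsroot⟩]
  · rintro rfl
    exact norm_sq_add_one_smul_smul_of_cubic_root htpos.le hroot

/-- Mirror step computation: for `p ≠ 0`, the equation `∇ψ(x⁺) = p` with
`ψ(x) = ‖x‖⁴/4 + ‖x‖²/2` is solved exactly by `x⁺ = t⋆ p`, where `t⋆` is the
unique positive real root of `t³‖p‖² + t - 1 = 0`. -/
theorem mirror_step_computation {n : ℕ} (p : EuclideanSpace ℝ (Fin n))
    (hp : p ≠ 0) :
    ∃ t : ℝ, 0 < t ∧ t ^ 3 * ‖p‖ ^ 2 + t - 1 = 0 ∧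
      (∀ s : ℝ, 0 < s → s ^ 3 * ‖p‖ ^ 2 + s - 1 = 0 → s = t) ∧
      (∀ xplus : EuclideanSpace ℝ (Fin n),
        gradient (psiEnt (n := n)) xplus = p ↔ xplus = t • p) :=
  mirror_step_computation_general p
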